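/- arXiv:1210.3449 — 3 statements merged into one kernel-verified Lean document; each statement's English description precedes it below -/
import Mathlib

section
/- Let H ∈ ℂ^{n_r × n_t} and let A_i, A_j ∈ ℂ^{n_t × n_t} satisfy the Hurwitz–Radon condition A_i A_j^H + A_j A_i^H = 0. Then tr(Ȟ Ǎ_i Ǎ_jᵀ Ȟᵀ) = 0; i.e., the corresponding columns h_i = vec(H A_i)~ and h_j = vec(H A_j)~ of the real equivalent channel matrix are orthogonal. -/
open Matrix

/-- Realification of a complex matrix: each entry `x = x_I + j x_Q` is replaced by the
real `2 × 2` block `[[x_I, -x_Q], [x_Q, x_I]]`. -/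
def realify {n m : Type*} (A : Matrix n m ℂ) : Matrix (n × Fin 2) (m × Fin 2) ℝ :=
  Matrix.of fun ip jq =>
    !![(A ip.1 jq.1).re, -(A ip.1 jq.1).im; (A ip.1 jq.1).im, (A ip.1 jq.1).re] ip.2 jq.2

/-! Realification is multiplicative, turns `ᴴ` into `ᵀ` and doubles the real part of the trace,
so `tr(Ȟ Ǎᵢ Ǎⱼᵀ Ȟᵀ) = 2 Re tr(M)` with `M = H Aᵢ Aⱼᴴ Hᴴ`. The Hurwitz–Radon condition says
exactly that `M + Mᴴ = H (Aᵢ Aⱼᴴ + Aⱼ Aᵢᴴ) Hᴴ = 0`, i.e. `M` is skew-Hermitian, so its trace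
is purely imaginary. -/

section Realify

variable {n m k : Type*}

lemma realify_mul [Fintype m] (A : Matrix n m ℂ) (B : Matrix m k ℂ) :
    realify (A * B) = realify A * realify B := by
  ext ⟨i, p⟩ ⟨j, q⟩
  simp only [realify, mul_apply, of_apply, Fintype.sum_prod_type]
  fin_cases p <;> fin_cases q <;>
    simp [Fin.sum_univ_succ, Complex.re_sum, Complex.im_sum, Complex.mul_re, Complex.mul_im,
      Finset.sum_add_distrib, sub_eq_add_neg, Finset.sum_neg_distrib] <;> ring

lemma realify_conjTranspose (A : Matrix n m ℂ) : realify Aᴴ = (realify A)ᵀ := by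
  ext ⟨i, p⟩ ⟨j, q⟩
  fin_cases p <;> fin_cases q <;> simp [realify]

lemma trace_realify [Fintype n] (A : Matrix n n ℂ) :
    trace (realify A) = 2 * (trace A).re := by
  simp [trace, realify, Fintype.sum_prod_type, Fin.sum_univ_succ, Complex.re_sum,
    Finset.sum_add_distrib, two_mul]

end Realify

lemma re_trace_eq_zero_of_add_conjTranspose_eq_zero {n : Type*} [Fintype n]
    {A : Matrix n n ℂ} (hA : A + Aᴴ = 0) : (trace A).re = 0 := by
  have h : trace A + star (trace A) = 0 := by
    rw [← trace_conjTranspose, ← trace_add, hA, trace_zero]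
  have := congrArg Complex.re h
  simp only [Complex.add_re, Complex.star_def, Complex.conj_re, Complex.zero_re] at this
  linarith

/-- Hurwitz–Radon orthogonal weight matrices give orthogonal columns of the real
equivalent channel matrix: `tr(Ȟ Ǎᵢ Ǎⱼᵀ Ȟᵀ) = 0`. -/
theorem hurwitz_radon_orthogonal_columns (nr nt : ℕ)
    (H : Matrix (Fin nr) (Fin nt) ℂ) (Ai Aj : Matrix (Fin nt) (Fin nt) ℂ)
    (hHR : Ai * Ajᴴ + Aj * Aiᴴ = 0) :
    Matrix.trace (realify H * realify Ai * (realify Aj)ᵀ * (realify H)ᵀ) = 0 := by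
  have hskew : H * Ai * Ajᴴ * Hᴴ + (H * Ai * Ajᴴ * Hᴴ)ᴴ = 0 := by
    calc H * Ai * Ajᴴ * Hᴴ + (H * Ai * Ajᴴ * Hᴴ)ᴴ = H * (Ai * Ajᴴ + Aj * Aiᴴ) * Hᴴ := by
          simp only [conjTranspose_mul, conjTranspose_conjTranspose, Matrix.mul_add,
            Matrix.add_mul, Matrix.mul_assoc]
      _ = 0 := by rw [hHR, Matrix.mul_zero, Matrix.zero_mul]
  rw [← realify_conjTranspose, ← realify_conjTranspose, ← realify_mul, ← realify_mul,
    ← realify_mul, trace_realify, re_trace_eq_zero_of_add_conjTranspose_eq_zero hskew, mul_zero]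
end

section
/- Let H_eq = [H_1 H_2] be a real matrix with full column rank and QR decomposition H_eq = QR with Q = [Q_1 Q_2] having orthonormal columns and R = [[R_1, E],[0, R_2]] with R_2 square upper triangular and invertible. If both H_2ᵀH_2 and EᵀE are block diagonal with k blocks of size γ×γ, then R_2 is block diagonal with k blocks of size γ×γ. -/
/-!
Since `Q` has orthonormal columns, `H₂ᵀH₂ = EᵀE + R₂ᵀR₂`, so `R₂ᵀR₂` is block diagonal.
For an upper triangular `R` with invertible diagonal this forces `R` itself to be block diagonal:
going down the rows, for `i` in an earlier block than `j` the entry `(RᵀR) i j = ∑ₗ R l i * R l j`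
reduces to `R i i * R i j`, because `R l i = 0` for `l > i` and the rows `l < i` are already known
to vanish outside their blocks.
-/

open Matrix

namespace Matrix

variable {l m n α R : Type*}

def IsBlockDiagonal [Zero R] (M : Matrix n n R) (b : n → α) : Prop :=
  ∀ i j, b i ≠ b j → M i j = 0

theorem transpose_mul_self_of_transpose_mul_self_eq_one [Fintype l] [Fintype m] [CommSemiring R]
    [DecidableEq m] {Q : Matrix l m R} (hQ : Qᵀ * Q = 1) (M : Matrix m n R) :
    (Q * M)ᵀ * (Q * M) = Mᵀ * M := by
  rw [transpose_mul, Matrix.mul_assoc, ← Matrix.mul_assoc Qᵀ, hQ, Matrix.one_mul]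

theorem transpose_fromRows_mul_fromRows [Fintype l] [Fintype m] [Semiring R]
    (A : Matrix l n R) (B : Matrix m n R) :
    (fromRows A B)ᵀ * fromRows A B = Aᵀ * A + Bᵀ * B := by
  rw [transpose_fromRows, fromCols_mul_fromRows]

theorem mul_submatrix_id {o : Type*} [Fintype m] [Mul R] [AddCommMonoid R] (A : Matrix l m R)
    (B : Matrix m n R) (f : o → n) : (A * B).submatrix id f = A * B.submatrix id f :=
  rfl

theorem submatrix_inr_fromBlocks {o : Type*} (A : Matrix l m R) (B : Matrix l n R)
    (C : Matrix o m R) (D : Matrix o n R) :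
    (fromBlocks A B C D).submatrix id Sum.inr = fromRows B D := by
  ext (i | i) j <;> rfl

theorem IsUpperTriangular.isUnit_diag_of_isUnit [Fintype n] [LinearOrder n] [CommRing R]
    {M : Matrix n n R} (hM : M.IsUpperTriangular) (hunit : IsUnit M) (i : n) :
    IsUnit (M i i) := by
  rw [isUnit_iff_isUnit_det, det_of_isUpperTriangular hM, IsUnit.prod_univ_iff] at hunit
  exact hunit i

theorem IsUpperTriangular.isBlockDiagonal_of_transpose_mul_self [Fintype n] [LinearOrder n]
    [Semiring R] [PartialOrder α] {M : Matrix n n R} {b : n → α}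
    (hM : M.IsUpperTriangular) (hdiag : ∀ i, IsUnit (M i i)) (hb : Monotone b)
    (hMM : (Mᵀ * M).IsBlockDiagonal b) : M.IsBlockDiagonal b := by
  intro i
  induction i using WellFoundedLT.induction with
  | _ i ih =>
  intro j hne
  rcases lt_trichotomy j i with hji | rfl | hij
  · exact hM hji
  · exact absurd rfl hne
  · have hbij : b i < b j := (hb hij.le).lt_of_ne hne
    have hrow : (Mᵀ * M) i j = M i i * M i j := by
      rw [mul_apply, Finset.sum_eq_single i]
      · rfl
      · intro l _ hli
        rcases hli.lt_or_gt with hli | hil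
        · rw [ih l hli j ((hb hli.le).trans_lt hbij).ne, mul_zero]
        · rw [transpose_apply, hM hil, zero_mul]
      · simp
    rw [← (hdiag i).mul_right_eq_zero, ← hrow]
    exact hMM i j hne

end Matrix

theorem block_orthogonal_R2_general (N L k γ : ℕ)
    (Heq : Matrix (Fin N) (Fin L ⊕ Fin (k * γ)) ℝ)
    (Q : Matrix (Fin N) (Fin L ⊕ Fin (k * γ)) ℝ)
    (R1 : Matrix (Fin L) (Fin L) ℝ)
    (E : Matrix (Fin L) (Fin (k * γ)) ℝ)
    (R2 : Matrix (Fin (k * γ)) (Fin (k * γ)) ℝ)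
    (hQR : Heq = Q * Matrix.fromBlocks R1 E 0 R2)
    (hQ : Qᵀ * Q = 1)
    (hR2tri : ∀ i j : Fin (k * γ), j < i → R2 i j = 0)
    (hR2inv : IsUnit R2)
    (hH2 : ∀ i j : Fin (k * γ), (i : ℕ) / γ ≠ (j : ℕ) / γ →
      ((Heq.submatrix id Sum.inr)ᵀ * Heq.submatrix id Sum.inr) i j = 0)
    (hE : ∀ i j : Fin (k * γ), (i : ℕ) / γ ≠ (j : ℕ) / γ → (Eᵀ * E) i j = 0) :
    ∀ i j : Fin (k * γ), (i : ℕ) / γ ≠ (j : ℕ) / γ → R2 i j = 0 := by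
  have hupper : R2.IsUpperTriangular := fun i j => hR2tri i j
  have hgram : (Heq.submatrix id Sum.inr)ᵀ * Heq.submatrix id Sum.inr = Eᵀ * E + R2ᵀ * R2 := by
    rw [hQR, mul_submatrix_id, submatrix_inr_fromBlocks,
      transpose_mul_self_of_transpose_mul_self_eq_one hQ, transpose_fromRows_mul_fromRows]
  have hR2gram : (R2ᵀ * R2).IsBlockDiagonal fun i : Fin (k * γ) => (i : ℕ) / γ := fun i j hij => by
    simpa only [hgram, Matrix.add_apply, hE i j hij, zero_add] using hH2 i j hij
  exact hupper.isBlockDiagonal_of_transpose_mul_self (hupper.isUnit_diag_of_isUnit hR2inv)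
    (fun _ _ hle => Nat.div_le_div_right hle) hR2gram

theorem block_orthogonal_R2 (N L k γ : ℕ) (hk : 1 ≤ k) (hγ : 1 ≤ γ)
    (Heq : Matrix (Fin N) (Fin L ⊕ Fin (k * γ)) ℝ)
    (Q : Matrix (Fin N) (Fin L ⊕ Fin (k * γ)) ℝ)
    (R1 : Matrix (Fin L) (Fin L) ℝ)
    (E : Matrix (Fin L) (Fin (k * γ)) ℝ)
    (R2 : Matrix (Fin (k * γ)) (Fin (k * γ)) ℝ)
    (hrank : LinearIndependent ℝ (fun j : Fin L ⊕ Fin (k * γ) => fun i : Fin N => Heq i j))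
    (hQR : Heq = Q * Matrix.fromBlocks R1 E 0 R2)
    (hQ : Qᵀ * Q = 1)
    (hR2tri : ∀ i j : Fin (k * γ), j < i → R2 i j = 0)
    (hR2inv : IsUnit R2)
    (hH2 : ∀ i j : Fin (k * γ), (i : ℕ) / γ ≠ (j : ℕ) / γ →
      ((Heq.submatrix id Sum.inr)ᵀ * Heq.submatrix id Sum.inr) i j = 0)
    (hE : ∀ i j : Fin (k * γ), (i : ℕ) / γ ≠ (j : ℕ) / γ → (Eᵀ * E) i j = 0) :
    ∀ i j : Fin (k * γ), (i : ℕ) / γ ≠ (j : ℕ) / γ → R2 i j = 0 :=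
  block_orthogonal_R2_general N L k γ Heq Q R1 E R2 hQR hQ hR2tri hR2inv hH2 hE
end

section
/- If R is a square upper triangular real matrix with nonzero diagonal entries and RᵀR is block diagonal with k blocks of size γ×γ, then R itself is block diagonal with k blocks of size γ×γ. -/
/-!
Let `b` be a monotone block index. By strong induction on the row `i`, every entry `R i j` with
`b i < b j` vanishes: in `(Rᵀ * R) i j = ∑ l, R l i * R l j` the terms with `l > i` vanish because
`R` is upper triangular and those with `l < i` by induction, leaving `R i i * R i j = 0`. The entries
with `b j < b i` lie below the diagonal.
-/

open Matrix

namespace Matrix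

variable {m α β : Type*} [LinearOrder m] [Preorder β] {b : m → β}

theorem IsUpperTriangular.blockTriangular [Zero α] {R : Matrix m m α} (hR : R.IsUpperTriangular)
    (hb : Monotone b) : R.BlockTriangular b :=
  fun _ _ h => hR (hb.reflect_lt h)

theorem IsUpperTriangular.transpose_blockTriangular_of_transpose_mul_self [Fintype m]
    [CommSemiring α] [NoZeroDivisors α] {R : Matrix m m α} (hR : R.IsUpperTriangular)
    (hdiag : ∀ i, R i i ≠ 0) (hb : Monotone b) (hgram : (Rᵀ * R).BlockTriangular b) :
    Rᵀ.BlockTriangular b := by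
  intro j i hij
  induction i using WellFoundedLT.induction generalizing j with
  | ind i ih =>
    have hsum : (Rᵀ * R) i j = R i i * R i j := by
      rw [mul_apply, Finset.sum_eq_single i]
      · rfl
      · intro l _ hli
        rcases hli.lt_or_gt with hlt | hgt
        · exact mul_eq_zero_of_right _ (ih l hlt ((hb hlt.le).trans_lt hij))
        · exact mul_eq_zero_of_left (hR hgt) _
      · simp
    have hzero : (Rᵀ * R) i j = 0 := by
      have h := hgram hij
      rwa [← transpose_apply (Rᵀ * R), transpose_mul, transpose_transpose] at h
    exact (mul_eq_zero.mp (hsum ▸ hzero)).resolve_left (hdiag i)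

end Matrix

theorem upper_triangular_block_diag_of_gram_block_diag_general (k γ : ℕ)
    (R : Matrix (Fin (k * γ)) (Fin (k * γ)) ℝ)
    (htri : ∀ i j : Fin (k * γ), j < i → R i j = 0)
    (hdiag : ∀ i : Fin (k * γ), R i i ≠ 0)
    (hgram : ∀ i j : Fin (k * γ), (i : ℕ) / γ ≠ (j : ℕ) / γ → (Rᵀ * R) i j = 0) :
    ∀ i j : Fin (k * γ), (i : ℕ) / γ ≠ (j : ℕ) / γ → R i j = 0 := by
  set block : Fin (k * γ) → ℕ := fun i => (i : ℕ) / γ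
  have hR : R.IsUpperTriangular := fun i j h => htri i j h
  have hmono : Monotone block := fun _ _ h => Nat.div_le_div_right h
  have hupper : Rᵀ.BlockTriangular block :=
    hR.transpose_blockTriangular_of_transpose_mul_self hdiag hmono
      fun i j h => hgram i j h.ne'
  intro i j hij
  rcases hij.lt_or_gt with hlt | hgt
  · exact hupper hlt
  · exact hR.blockTriangular hmono hgt

theorem upper_triangular_block_diag_of_gram_block_diag (k γ : ℕ) (hk : 1 ≤ k) (hγ : 1 ≤ γ)
    (R : Matrix (Fin (k * γ)) (Fin (k * γ)) ℝ)
    (htri : ∀ i j : Fin (k * γ), j < i → R i j = 0)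
    (hdiag : ∀ i : Fin (k * γ), R i i ≠ 0)
    (hgram : ∀ i j : Fin (k * γ), (i : ℕ) / γ ≠ (j : ℕ) / γ → (Rᵀ * R) i j = 0) :
    ∀ i j : Fin (k * γ), (i : ℕ) / γ ≠ (j : ℕ) / γ → R i j = 0 :=
  upper_triangular_block_diag_of_gram_block_diag_general k γ R htri hdiag hgram
end
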